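/- arXiv:2305.08858 — 2 statements merged into one kernel-verified Lean document; each statement's English description precedes it below -/
import Mathlib

section
/- A proper graded submodule U of M is graded weakly J_gr-semiprime if and only if for every graded submodule K of M, every homogeneous r ∈ h(R), and every n ∈ ℤ⁺ with 0 ≠ rⁿK ⊆ U, one has rK ⊆ U + J_gr(M). -/
open Pointwise

/-- A submodule is graded if it is generated by its homogeneous elements. -/
def IsGradedSub {Γ R M σ : Type*} [CommRing R] [AddCommGroup M] [Module R M]
    [SetLike σ M] (ℳ : Γ → σ) (U : Submodule R M) : Prop :=
  U = Submodule.span R {m | m ∈ U ∧ SetLike.IsHomogeneousElem ℳ m}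

/-- A graded maximal submodule. -/
def IsGrMaximal {Γ R M σ : Type*} [CommRing R] [AddCommGroup M] [Module R M]
    [SetLike σ M] (ℳ : Γ → σ) (B : Submodule R M) : Prop :=
  IsGradedSub ℳ B ∧ B ≠ ⊤ ∧
    ∀ L : Submodule R M, IsGradedSub ℳ L → B ≤ L → L = B ∨ L = ⊤

/-- The graded Jacobson radical: the intersection of all graded maximal submodules
(the whole module if there are none). -/
def Jgr {Γ R M σ : Type*} [CommRing R] [AddCommGroup M] [Module R M]
    [SetLike σ M] (ℳ : Γ → σ) : Submodule R M :=
  sInf {B | IsGrMaximal ℳ B}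

/-- Graded weakly semiprime submodule. -/
def IsGrWSemiprime {Γ R M σR σM : Type*} [CommRing R] [AddCommGroup M] [Module R M]
    [SetLike σR R] [SetLike σM M] (𝒜 : Γ → σR) (ℳ : Γ → σM) (U : Submodule R M) : Prop :=
  IsGradedSub ℳ U ∧ U ≠ ⊤ ∧
    ∀ (r : R) (m : M) (n : ℕ), 0 < n → SetLike.IsHomogeneousElem 𝒜 r →
      SetLike.IsHomogeneousElem ℳ m → r ^ n • m ≠ 0 → r ^ n • m ∈ U → r • m ∈ U

/-- Graded weakly `J_gr`-semiprime submodule. -/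
def IsGrWJgrSemiprime {Γ R M σR σM : Type*} [CommRing R] [AddCommGroup M] [Module R M]
    [SetLike σR R] [SetLike σM M] (𝒜 : Γ → σR) (ℳ : Γ → σM) (U : Submodule R M) : Prop :=
  IsGradedSub ℳ U ∧ U ≠ ⊤ ∧
    ∀ (r : R) (m : M) (n : ℕ), 0 < n → SetLike.IsHomogeneousElem 𝒜 r →
      SetLike.IsHomogeneousElem ℳ m → r ^ n • m ≠ 0 → r ^ n • m ∈ U → r • m ∈ U ⊔ Jgr ℳ

/-- The residual submodule `(U :_M L) = {m : M | L • m ⊆ U}`. -/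
def mcolon {R M : Type*} [CommRing R] [AddCommGroup M] [Module R M]
    (U : Submodule R M) (L : Ideal R) : Submodule R M where
  carrier := {m | ∀ x ∈ L, x • m ∈ U}
  add_mem' := by
    intro a b ha hb x hx
    simpa [smul_add] using U.add_mem (ha x hx) (hb x hx)
  zero_mem' := by intro x hx; simp
  smul_mem' := by
    intro c m hm x hx
    rw [smul_comm]
    exact U.smul_mem c (hm x hx)


/-!
A nonzero `rⁿk` lying in `U` gives `r • k ∈ U + J_gr(M)` directly; when `rⁿk = 0` the element
`r • k` already lies in every graded maximal submodule `B`. Indeed, otherwise `B + R(rk) = M`, so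
`(1 - sr) • k ∈ B` for some `s`, hence `(1 - (sr)ⁿ) • k ∈ B` because `1 - sr ∣ 1 - (sr)ⁿ`; as
`(sr)ⁿ • k = 0` this puts `k`, and then `r • k`, in `B`. So it suffices to test the condition on
homogeneous generators of `K`; conversely, the condition for `K = Rm` is the defining one for `m`.
-/

section

variable {Γ R M σ : Type*} [CommRing R] [AddCommGroup M] [Module R M] [SetLike σ M] {ℳ : Γ → σ}

theorem isGradedSub_span {S : Set M} (hS : ∀ m ∈ S, SetLike.IsHomogeneousElem ℳ m) :
    IsGradedSub ℳ (Submodule.span R S) :=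
  le_antisymm
    (Submodule.span_le.mpr fun m hm => Submodule.subset_span ⟨Submodule.subset_span hm, hS m hm⟩)
    (Submodule.span_le.mpr fun _ hm => hm.1)

theorem IsGradedSub.le_of_forall_isHomogeneousElem {K N : Submodule R M} (hK : IsGradedSub ℳ K)
    (hN : ∀ m ∈ K, SetLike.IsHomogeneousElem ℳ m → m ∈ N) : K ≤ N := by
  rw [hK, Submodule.span_le]
  exact fun m hm => hN m hm.1 hm.2

theorem IsGradedSub.sup_span_singleton {B : Submodule R M} (hB : IsGradedSub ℳ B) {x : M}
    (hx : SetLike.IsHomogeneousElem ℳ x) : IsGradedSub ℳ (B ⊔ Submodule.span R {x}) := by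
  rw [hB, ← Submodule.span_union]
  refine isGradedSub_span ?_
  rintro m (hm | rfl)
  exacts [hm.2, hx]

theorem IsGrMaximal.sup_span_singleton_eq_top {B : Submodule R M} (hB : IsGrMaximal ℳ B) {x : M}
    (hx : SetLike.IsHomogeneousElem ℳ x) (hxB : x ∉ B) : B ⊔ Submodule.span R {x} = ⊤ :=
  (hB.2.2 _ (hB.1.sup_span_singleton hx) le_sup_left).resolve_left fun h =>
    hxB (h ▸ Submodule.mem_sup_right (Submodule.mem_span_singleton_self x))

end

theorem Submodule.mem_of_sub_smul_mem_of_pow_smul_eq_zero {R M : Type*} [CommRing R]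
    [AddCommGroup M] [Module R M] {B : Submodule R M} {x : R} {k : M} {n : ℕ}
    (hB : k - x • k ∈ B) (hx : x ^ n • k = 0) : k ∈ B := by
  obtain ⟨c, hc⟩ := one_sub_dvd_one_sub_pow x n
  have h : (1 - x ^ n) • k ∈ B := by
    rw [hc, mul_comm, mul_smul, sub_smul, one_smul]
    exact B.smul_mem c hB
  rwa [sub_smul, one_smul, hx, sub_zero] at h

theorem IsGrMaximal.smul_mem_of_pow_smul_eq_zero {Γ R M σ : Type*} [CommRing R]
    [AddCommGroup M] [Module R M] [SetLike σ M] {ℳ : Γ → σ} {B : Submodule R M}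
    (hB : IsGrMaximal ℳ B) {r : R} {k : M} {n : ℕ} (hrk : SetLike.IsHomogeneousElem ℳ (r • k))
    (h0 : r ^ n • k = 0) : r • k ∈ B := by
  by_contra hrkB
  obtain ⟨b, hb, y, hy, hk⟩ :=
    Submodule.mem_sup.mp ((hB.sup_span_singleton_eq_top hrk hrkB).symm ▸ Submodule.mem_top (x := k))
  obtain ⟨s, rfl⟩ := Submodule.mem_span_singleton.mp hy
  have hsub : k - (s * r) • k ∈ B := by
    rwa [mul_smul, ← eq_sub_of_add_eq hk]
  have hpow : (s * r) ^ n • k = 0 := by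
    rw [mul_pow, mul_smul, h0, smul_zero]
  exact hrkB (B.smul_mem r (Submodule.mem_of_sub_smul_mem_of_pow_smul_eq_zero hsub hpow))

theorem smul_mem_Jgr_of_pow_smul_eq_zero {Γ R M σ : Type*} [CommRing R] [AddCommGroup M]
    [Module R M] [SetLike σ M] {ℳ : Γ → σ} {r : R} {k : M} {n : ℕ}
    (hrk : SetLike.IsHomogeneousElem ℳ (r • k)) (h0 : r ^ n • k = 0) : r • k ∈ Jgr (R := R) ℳ :=
  Submodule.mem_sInf.mpr fun _ hB => IsGrMaximal.smul_mem_of_pow_smul_eq_zero hB hrk h0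

theorem IsGrWJgrSemiprime.smul_mem_of_pow_smul_mem {Γ R M : Type*} [AddMonoid Γ] [CommRing R]
    [AddCommGroup M] [Module R M] {𝒜 : Γ → AddSubgroup R} {ℳ : Γ → AddSubgroup M}
    [SetLike.GradedSMul 𝒜 ℳ] {U : Submodule R M} (hU : IsGrWJgrSemiprime 𝒜 ℳ U) {r : R}
    {m : M} {n : ℕ} (hn : 0 < n) (hr : SetLike.IsHomogeneousElem 𝒜 r)
    (hm : SetLike.IsHomogeneousElem ℳ m) (hmem : r ^ n • m ∈ U) : r • m ∈ U ⊔ Jgr ℳ := by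
  by_cases h0 : r ^ n • m = 0
  · exact Submodule.mem_sup_right (smul_mem_Jgr_of_pow_smul_eq_zero (hr.graded_smul hm) h0)
  · exact hU.2.2 r m n hn hr hm h0 hmem

theorem pow_smul_span_singleton_subset {R M : Type*} [CommRing R] [AddCommGroup M] [Module R M]
    {U : Submodule R M} {r : R} {m : M} {n : ℕ} (hmem : r ^ n • m ∈ U) :
    r ^ n • (Submodule.span R {m} : Set M) ⊆ U := by
  rintro _ ⟨_, hx, rfl⟩
  obtain ⟨s, rfl⟩ := Submodule.mem_span_singleton.mp hx
  change r ^ n • s • m ∈ U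
  rw [smul_comm]
  exact U.smul_mem s hmem

variable {Γ : Type*} [AddGroup Γ] [DecidableEq Γ]
  {R : Type*} [CommRing R] (𝒜 : Γ → AddSubgroup R) [GradedRing 𝒜]
  {M : Type*} [AddCommGroup M] [Module R M]
  (ℳ : Γ → AddSubgroup M) [SetLike.GradedSMul 𝒜 ℳ] [DirectSum.Decomposition ℳ]

theorem stmt6 (U : Submodule R M) (hU : IsGradedSub ℳ U) (hprop : U ≠ ⊤) :
    IsGrWJgrSemiprime 𝒜 ℳ U ↔
      ∀ K : Submodule R M, IsGradedSub ℳ K → ∀ r : R, SetLike.IsHomogeneousElem 𝒜 r →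
        ∀ n : ℕ, 0 < n → r ^ n • (K : Set M) ≠ {0} → r ^ n • (K : Set M) ⊆ (U : Set M) →
          r • (K : Set M) ⊆ ((U ⊔ Jgr ℳ : Submodule R M) : Set M) := by
  constructor
  · intro hJ K hK r hr n hn _ hsub
    have hle : K ≤ (U ⊔ Jgr ℳ).comap (r • LinearMap.id) :=
      hK.le_of_forall_isHomogeneousElem fun m hmK hm =>
        hJ.smul_mem_of_pow_smul_mem hn hr hm (hsub (Set.smul_mem_smul_set hmK))
    exact Set.smul_set_subset_iff.mpr fun k hk => hle hk
  · refine fun h => ⟨hU, hprop, fun r m n hn hr hm hne hmem => ?_⟩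
    have hmK := Submodule.mem_span_singleton_self (R := R) m
    refine h _ (isGradedSub_span (by simpa using hm)) r hr n hn ?_
      (pow_smul_span_singleton_subset hmem) (Set.smul_mem_smul_set hmK)
    intro hzero
    exact hne (hzero ▸ Set.smul_mem_smul_set hmK :)
end

section
/- Let M be a graded finitely generated faithful graded multiplication R-module and U a proper graded submodule with J_gr(M) = J_gr(R)M. Then the following are equivalent: (i) U is a graded weakly J_gr-semiprime submodule of M; (ii) (U :_R M) is a graded weakly J_gr-semiprime ideal of R; (iii) U = LM for some graded weakly J_gr-semiprime ideal L of R. -/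
open Pointwise

/-! Since `M` is a faithful finitely generated multiplication module, it is a cancellation module:
`(LM :_R M) = L` for every ideal `L` (the ideal `θ = ∑ₘ (Rm :_R M)` satisfies `θM = M`, so `θ = R`
by Nakayama, and every `c ∈ (Rm :_R M)` with `sM ⊆ LM` has `c²s ∈ L`). Together with
`U = (U :_R M)M` and `J_gr(M) = J_gr(R)M` this gives `(U + J_gr(M) :_R M) = (U :_R M) + J_gr(R)`,
which transports the semiprimeness condition between `U` and `(U :_R M)` in both directions
(homogeneous elements generate, and `rK ⊆ (U :_R M) + J_gr(R)` gives `rm ∈ U + J_gr(M)` when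
`Rm = KM`).

The condition `0 ≠ aⁿx` in the definitions is harmless: if `aⁿx = 0` with `a`, `x` homogeneous,
then `ax` lies in every graded maximal submodule `B`, since otherwise `M = B + R ax`, and writing
`x = b + tax` gives `x = (1 + ta + ⋯ + (ta)ⁿ⁻¹) b ∈ B`. -/

open DirectSum

section ModuleTheory

variable {R M : Type*} [CommRing R] [AddCommGroup M] [Module R M]

namespace Submodule

theorem mem_of_mem_sup_span_smul_of_pow_smul_eq_zero {B : Submodule R M} {a : R} {x : M}
    {n : ℕ} (h0 : a ^ n • x = 0) (hx : x ∈ B ⊔ span R {a • x}) : x ∈ B := by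
  obtain ⟨b, hb, y, hy, hxy⟩ := mem_sup.1 hx
  obtain ⟨t, rfl⟩ := mem_span_singleton.1 hy
  have hb' : (1 - t * a) • x = b := by
    rw [sub_smul, one_smul, mul_smul, sub_eq_iff_eq_add, hxy]
  have hx' : x = (∑ i ∈ Finset.range n, (t * a) ^ i) • b :=
    calc x = ((∑ i ∈ Finset.range n, (t * a) ^ i) * (1 - t * a) + (t * a) ^ n) • x := by
          rw [geom_sum_mul_neg, sub_add_cancel, one_smul]
      _ = _ := by rw [add_smul, mul_smul, hb', mul_pow, mul_smul, h0, smul_zero, add_zero]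
  rw [hx']
  exact B.smul_mem _ hb

theorem colon_smul_top_eq_self {U : Submodule R M} {K : Ideal R} (hK : U = K • ⊤) :
    U.colon ⊤ • (⊤ : Submodule R M) = U := by
  refine le_antisymm (smul_le.2 fun c hc x _ => mem_colon.1 hc x trivial) ?_
  calc U = K • ⊤ := hK
    _ ≤ U.colon ⊤ • ⊤ :=
      smul_mono_left fun k hk => mem_colon.2 fun x _ => hK ▸ smul_mem_smul hk trivial

theorem sq_mul_mem_of_mem_span_singleton_colon (hfaith : ∀ r : R, (∀ m : M, r • m = 0) → r = 0)
    {I : Ideal R} {s c : R} {m : M} (hs : s ∈ (I • ⊤ : Submodule R M).colon ⊤)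
    (hc : c ∈ (span R {m}).colon ⊤) : c ^ 2 * s ∈ I := by
  have hcI : (I • ⊤ : Submodule R M).map (LinearMap.lsmul R M c) ≤ I • span R {m} := by
    rw [map_smul'']
    exact smul_mono_right _ (map_le_iff_le_comap.2 fun x _ => mem_colon.1 hc x trivial)
  obtain ⟨b, hb, hbm⟩ := mem_smul_span_singleton.1 (hcI ⟨_, mem_colon.1 hs m trivial, rfl⟩)
  have hbm' : (c * s - b) • m = 0 := by
    simp only [LinearMap.lsmul_apply] at hbm
    rw [sub_smul, mul_smul, hbm, sub_self]
  have hann : c * (c * s - b) = 0 := hfaith _ fun x => by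
    obtain ⟨t, ht⟩ := mem_span_singleton.1 (mem_colon.1 hc x trivial)
    rw [mul_comm, mul_smul, ← ht, smul_comm, hbm', smul_zero]
  rw [show c ^ 2 * s = c * b by linear_combination hann]
  exact I.mul_mem_left c hb

theorem eq_top_of_top_le_smul_top (hfaith : ∀ r : R, (∀ m : M, r • m = 0) → r = 0)
    (hfg : (⊤ : Submodule R M).FG) {J : Ideal R} (h : ⊤ ≤ J • (⊤ : Submodule R M)) : J = ⊤ := by
  obtain ⟨r, hr1, hr0⟩ := exists_sub_one_mem_and_smul_eq_zero_of_fg_of_le_smul J ⊤ hfg h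
  rw [hfaith r fun m => hr0 m trivial, zero_sub] at hr1
  exact J.eq_top_of_isUnit_mem hr1 isUnit_one.neg

theorem smul_top_colon_eq_of_faithful (hfaith : ∀ r : R, (∀ m : M, r • m = 0) → r = 0)
    (hfg : (⊤ : Submodule R M).FG) {S : Set M} (hS : span R S = ⊤)
    (hSmul : ∀ m ∈ S, m ∈ (span R {m}).colon ⊤ • (⊤ : Submodule R M)) (I : Ideal R) :
    (I • ⊤ : Submodule R M).colon ⊤ = I := by
  refine le_antisymm (fun s hs => ?_) fun i hi => mem_colon.2 fun x _ => smul_mem_smul hi trivial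
  set θ : Ideal R := ⨆ m ∈ S, (span R {m}).colon ⊤
  have hθ : θ = ⊤ := eq_top_of_top_le_smul_top hfaith hfg <| hS.ge.trans <| span_le.2 fun m hm =>
    smul_mono_left (le_iSup₂ (f := fun m (_ : m ∈ S) => (span R {m}).colon ⊤) m hm) (hSmul m hm)
  have hrad : θ ≤ (I.colon {s}).radical := iSup₂_le fun m _ c hc =>
    ⟨2, mem_colon_singleton.2 (sq_mul_mem_of_mem_span_singleton_colon hfaith hs hc)⟩
  have hs' : I.colon {s} = ⊤ := Ideal.radical_eq_top.1 (top_le_iff.1 (hθ ▸ hrad))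
  simpa using (colon_eq_top_iff_subset _).1 hs'

end Submodule

open Submodule

section Grading

variable {ι σ : Type*} [SetLike σ M] (ℳ : ι → σ)

theorem isGradedSub_of_le {U : Submodule R M}
    (h : U ≤ span R {m | m ∈ U ∧ SetLike.IsHomogeneousElem ℳ m}) : IsGradedSub ℳ U :=
  le_antisymm h (span_le.2 fun _ hm => hm.1)

theorem IsGradedSub.le_of_forall_homogeneous {U N : Submodule R M} (hU : IsGradedSub ℳ U)
    (h : ∀ m ∈ U, SetLike.IsHomogeneousElem ℳ m → m ∈ N) : U ≤ N :=
  hU.le.trans (span_le.2 fun m hm => h m hm.1 hm.2)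

theorem isGradedSub_span_singleton {m : M} (hm : SetLike.IsHomogeneousElem ℳ m) :
    IsGradedSub ℳ (span R {m}) :=
  isGradedSub_of_le ℳ (span_le.2 (Set.singleton_subset_iff.2
    (subset_span ⟨mem_span_singleton_self m, hm⟩)))

theorem IsGradedSub.sup {U V : Submodule R M} (hU : IsGradedSub ℳ U) (hV : IsGradedSub ℳ V) :
    IsGradedSub ℳ (U ⊔ V) :=
  isGradedSub_of_le ℳ (sup_le (hU.le.trans (span_mono fun _ hm => ⟨mem_sup_left hm.1, hm.2⟩))
    (hV.le.trans (span_mono fun _ hm => ⟨mem_sup_right hm.1, hm.2⟩)))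

theorem IsGrMaximal.smul_mem_of_pow_smul_eq_zero_s19 {B : Submodule R M} (hB : IsGrMaximal ℳ B)
    {a : R} {x : M} (hax : SetLike.IsHomogeneousElem ℳ (a • x)) {n : ℕ} (h0 : a ^ n • x = 0) :
    a • x ∈ B := by
  obtain ⟨hBg, -, hBmax⟩ := hB
  rcases hBmax _ (hBg.sup ℳ (isGradedSub_span_singleton ℳ hax)) le_sup_left with hEq | hTop
  · exact hEq ▸ mem_sup_right (mem_span_singleton_self _)
  · exact B.smul_mem a (mem_of_mem_sup_span_smul_of_pow_smul_eq_zero h0 (hTop ▸ mem_top))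

theorem smul_mem_jgr_of_pow_smul_eq_zero {a : R} {x : M}
    (hax : SetLike.IsHomogeneousElem ℳ (a • x)) {n : ℕ} (h0 : a ^ n • x = 0) :
    a • x ∈ (Jgr ℳ : Submodule R M) :=
  mem_sInf.2 fun _ hB => hB.smul_mem_of_pow_smul_eq_zero_s19 ℳ hax h0

theorem IsGrWJgrSemiprime.smul_mem_sup_jgr [Add ι] {σR : Type*} [SetLike σR R] {𝒜 : ι → σR}
    [SetLike.GradedSMul 𝒜 ℳ] {U : Submodule R M} (hU : IsGrWJgrSemiprime 𝒜 ℳ U) {r : R} {m : M}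
    {n : ℕ} (hn : 0 < n) (hr : SetLike.IsHomogeneousElem 𝒜 r)
    (hm : SetLike.IsHomogeneousElem ℳ m) (hmem : r ^ n • m ∈ U) : r • m ∈ U ⊔ Jgr ℳ := by
  by_cases h0 : r ^ n • m = 0
  · exact mem_sup_right (smul_mem_jgr_of_pow_smul_eq_zero ℳ (hr.graded_smul hm) h0)
  · exact hU.2.2 r m n hn hr hm h0 hmem

theorem mem_colon_univ_of_forall_homogeneous [DecidableEq ι] [AddSubmonoidClass σ M]
    [Decomposition ℳ] {N : Submodule R M} {r : R} (h : ∀ i, ∀ m ∈ ℳ i, r • m ∈ N) :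
    r ∈ N.colon ⊤ := by
  suffices ∀ x, r • x ∈ N from mem_colon.2 fun x _ => this x
  intro x
  induction x using DirectSum.Decomposition.inductionOn ℳ with
  | zero => simp
  | homogeneous m => exact h _ m m.2
  | add m m' hm hm' => rw [smul_add]; exact N.add_mem hm hm'

end Grading

end ModuleTheory

variable {Γ : Type*} [AddGroup Γ] [DecidableEq Γ]
  {R : Type*} [CommRing R] (𝒜 : Γ → AddSubgroup R) [GradedRing 𝒜]
  {M : Type*} [AddCommGroup M] [Module R M]
  (ℳ : Γ → AddSubgroup M) [SetLike.GradedSMul 𝒜 ℳ] [DirectSum.Decomposition ℳ]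

open Submodule

omit [GradedRing 𝒜] in
theorem coe_decompose_smul_add_of_left_mem {α : Γ} {r : R} (hr : r ∈ 𝒜 α) (x : M) (δ : Γ) :
    (decompose ℳ (r • x) (α + δ) : M) = r • (decompose ℳ x δ : M) := by
  induction x using DirectSum.Decomposition.inductionOn ℳ with
  | zero => simp
  | @homogeneous β x =>
    have hrx : r • (x : M) ∈ ℳ (α + β) := SetLike.GradedSMul.smul_mem hr x.2
    by_cases h : β = δ
    · subst h
      rw [decompose_of_mem_same ℳ hrx, decompose_of_mem_same ℳ x.2]
    · rw [decompose_of_mem_ne ℳ hrx (by simpa using h), decompose_of_mem_ne ℳ x.2 h, smul_zero]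
  | add x x' hx hx' => simp [smul_add, hx, hx']

theorem coe_decompose_smul_add_of_right_mem {δ : Γ} {x : M} (hx : x ∈ ℳ δ) (r : R) (α : Γ) :
    (decompose ℳ (r • x) (α + δ) : M) = (decompose 𝒜 r α : R) • x := by
  induction r using DirectSum.Decomposition.inductionOn 𝒜 with
  | zero => simp
  | @homogeneous β r =>
    have hrx : (r : R) • x ∈ ℳ (β + δ) := SetLike.GradedSMul.smul_mem r.2 hx
    by_cases h : β = α
    · subst h
      rw [decompose_of_mem_same ℳ hrx, decompose_of_mem_same 𝒜 r.2]
    · rw [decompose_of_mem_ne ℳ hrx (by simpa using h), decompose_of_mem_ne 𝒜 r.2 h, zero_smul]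
  | add r r' hr hr' => simp [add_smul, hr, hr']

include 𝒜 in
theorem IsGradedSub.decompose_mem {U : Submodule R M} (hU : IsGradedSub ℳ U) {u : M}
    (hu : u ∈ U) (γ : Γ) : (decompose ℳ u γ : M) ∈ U := by
  rw [hU] at hu
  induction hu using Submodule.span_induction generalizing γ with
  | mem x hx =>
    obtain ⟨hxU, δ, hδ⟩ := hx
    by_cases h : δ = γ
    · rwa [← h, decompose_of_mem_same ℳ hδ]
    · rw [decompose_of_mem_ne ℳ hδ h]
      exact U.zero_mem
  | zero => simp
  | add x y _ _ hx hy => simpa using U.add_mem (hx γ) (hy γ)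
  | smul r x _ hx =>
    induction r using DirectSum.Decomposition.inductionOn 𝒜 with
    | zero => simp
    | @homogeneous α r =>
      obtain ⟨δ, rfl⟩ : ∃ δ, γ = α + δ := ⟨-α + γ, (add_neg_cancel_left α γ).symm⟩
      rw [coe_decompose_smul_add_of_left_mem 𝒜 ℳ r.2]
      exact U.smul_mem r (hx δ)
    | add r r' hr hr' => simpa [add_smul] using U.add_mem hr hr'

theorem isGradedSub_colon_univ {U : Submodule R M} (hU : IsGradedSub ℳ U) :
    IsGradedSub 𝒜 (U.colon ⊤) := by
  classical
  refine isGradedSub_of_le 𝒜 fun c hc => ?_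
  rw [← sum_support_decompose 𝒜 c]
  refine sum_mem fun α _ => subset_span ⟨?_, α, SetLike.coe_mem _⟩
  refine mem_colon_univ_of_forall_homogeneous ℳ fun δ y hy => ?_
  rw [← coe_decompose_smul_add_of_right_mem 𝒜 ℳ hy]
  exact hU.decompose_mem 𝒜 ℳ (mem_colon.1 hc y trivial) _

theorem IsGrWJgrSemiprime.colon_univ {U : Submodule R M} (hU : IsGrWJgrSemiprime 𝒜 ℳ U)
    (hcolon : (U ⊔ Jgr ℳ).colon ⊤ = U.colon ⊤ ⊔ Jgr 𝒜) :
    IsGrWJgrSemiprime 𝒜 𝒜 (U.colon ⊤) := by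
  refine ⟨isGradedSub_colon_univ 𝒜 ℳ hU.1, fun h => hU.2.1 ?_, fun r a n hn hr ha _ hmem => ?_⟩
  · exact top_le_iff.1 fun x _ => (colon_eq_top_iff_subset _).1 h trivial
  · rw [smul_eq_mul, ← hcolon]
    refine mem_colon_univ_of_forall_homogeneous ℳ fun γ z hz => ?_
    rw [mul_smul]
    refine hU.smul_mem_sup_jgr ℳ hn hr (ha.graded_smul ⟨γ, hz⟩) ?_
    rw [← smul_assoc]
    exact mem_colon.1 hmem z trivial

omit [SetLike.GradedSMul 𝒜 ℳ] [DirectSum.Decomposition ℳ] in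
theorem IsGrWJgrSemiprime.of_colon_univ
    (hmult : ∀ V : Submodule R M, IsGradedSub ℳ V →
      ∃ K : Ideal R, IsGradedSub 𝒜 K ∧ V = K • (⊤ : Submodule R M))
    {U : Submodule R M} (hU : IsGradedSub ℳ U) (hprop : U ≠ ⊤)
    (hsup : (U.colon ⊤ ⊔ Jgr 𝒜) • (⊤ : Submodule R M) = U ⊔ Jgr ℳ)
    (h : IsGrWJgrSemiprime 𝒜 𝒜 (U.colon ⊤)) : IsGrWJgrSemiprime 𝒜 ℳ U := by
  refine ⟨hU, hprop, fun r m n hn hr hm _ hmem => ?_⟩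
  obtain ⟨K, hK, hKm⟩ := hmult _ (isGradedSub_span_singleton ℳ hm)
  have hrK : K ≤ Submodule.comap (LinearMap.mulLeft R r) (U.colon ⊤ ⊔ Jgr 𝒜) :=
    hK.le_of_forall_homogeneous 𝒜 fun k hk hkh => by
      have hk' : r ^ n * k ∈ U.colon ⊤ := mem_colon.2 fun x _ => by
        obtain ⟨t, ht⟩ := mem_span_singleton.1
          (hKm ▸ smul_mem_smul hk trivial : k • x ∈ span R {m})
        rw [mul_smul, ← ht, smul_comm]
        exact U.smul_mem t hmem
      simpa using h.smul_mem_sup_jgr 𝒜 hn hr hkh hk'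
  have hrKM : K • (⊤ : Submodule R M) ≤
      ((U.colon ⊤ ⊔ Jgr 𝒜) • (⊤ : Submodule R M)).comap (LinearMap.lsmul R M r) :=
    smul_le.2 fun k hk x _ => by
      rw [mem_comap, LinearMap.lsmul_apply, smul_smul]
      exact smul_mem_smul (hrK hk) mem_top
  rw [← hsup]
  exact hrKM (hKm ▸ mem_span_singleton_self m)

theorem stmt19 (hfaith : ∀ r : R, (∀ m : M, r • m = 0) → r = 0)
    (hfg : ∃ s : Finset M, (∀ m ∈ s, SetLike.IsHomogeneousElem ℳ m) ∧
      Submodule.span R (s : Set M) = ⊤)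
    (hmult : ∀ V : Submodule R M, IsGradedSub ℳ V →
      ∃ K : Ideal R, IsGradedSub 𝒜 K ∧ V = K • (⊤ : Submodule R M))
    (U : Submodule R M) (hU : IsGradedSub ℳ U) (hprop : U ≠ ⊤)
    (hJ : Jgr ℳ = (Jgr 𝒜 : Ideal R) • (⊤ : Submodule R M)) :
    List.TFAE [IsGrWJgrSemiprime 𝒜 ℳ U,
      IsGrWJgrSemiprime 𝒜 𝒜 (U.colon ⊤),
      ∃ L : Ideal R, IsGrWJgrSemiprime 𝒜 𝒜 L ∧ U = L • (⊤ : Submodule R M)] := by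
  obtain ⟨K, -, hKU⟩ := hmult U hU
  have hsup : (U.colon ⊤ ⊔ Jgr 𝒜) • (⊤ : Submodule R M) = U ⊔ Jgr ℳ := by
    rw [sup_smul, colon_smul_top_eq_self hKU, hJ]
  have hcancel : ∀ L : Ideal R, (L • ⊤ : Submodule R M).colon ⊤ = L := by
    obtain ⟨s, hs_hom, hs⟩ := hfg
    refine smul_top_colon_eq_of_faithful hfaith ⟨s, hs⟩ hs fun m hm => ?_
    obtain ⟨K, -, hKm⟩ := hmult _ (isGradedSub_span_singleton ℳ (hs_hom m hm))
    rw [colon_smul_top_eq_self hKm]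
    exact mem_span_singleton_self m
  tfae_have 1 → 2 := fun h => h.colon_univ 𝒜 ℳ (by rw [← hsup, hcancel])
  tfae_have 2 → 3 := fun h => ⟨U.colon ⊤, h, (colon_smul_top_eq_self hKU).symm⟩
  tfae_have 3 → 2 := by
    rintro ⟨L, hL, rfl⟩
    rwa [hcancel]
  tfae_have 2 → 1 := IsGrWJgrSemiprime.of_colon_univ 𝒜 ℳ hmult hU hprop hsup
  tfae_finish
end
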